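/- arXiv:0906.2222 — 4 statements merged into one kernel-verified Lean document; each statement's English description precedes it below -/
import Mathlib

section
/- Let N, m, k be natural numbers and let A : Matrix (Fin N) (Fin m) ℤ be an integer matrix such that the ℤ-linear map from ℤ^N to ℤ^m given by x ↦ Aᵀ.mulVec x (i.e., the map represented by the transpose of A) is surjective. Suppose r : Fin k → Fin N and c : Fin k → Fin m are injective functions such that A i (c j) = 0 for every j : Fin k and every i : Fin N not in the range of r (that is, the k rows indexed by r contain all the nonzero entries of the k columns indexed by c). Then the determinant of the k × k submatrix with entries A (r i) (c j) equals 1 or -1. -/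
/-- Algebraic core of the key lemma: if the map represented by `Aᵀ` is surjective
and `k` rows of `A` (indexed by `r`) contain all the nonzero entries of `k` of its
columns (indexed by `c`), then the induced `k × k` minor has determinant `±1`. -/
theorem stmt_0 (N m k : ℕ) (A : Matrix (Fin N) (Fin m) ℤ)
    (hsurj : Function.Surjective (fun x : Fin N → ℤ => A.transpose.mulVec x))
    (r : Fin k → Fin N) (c : Fin k → Fin m)
    (hr : Function.Injective r) (hc : Function.Injective c)
    (hzero : ∀ (j : Fin k) (i : Fin N), i ∉ Set.range r → A i (c j) = 0) :
    Matrix.det (Matrix.of fun i j : Fin k => A (r i) (c j)) = 1 ∨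
      Matrix.det (Matrix.of fun i j : Fin k => A (r i) (c j)) = -1 := by
  classical
  set B : Matrix (Fin k) (Fin k) ℤ := Matrix.of fun i j : Fin k => A (r i) (c j) with hB
  have hBsurj : Function.Surjective (B.transpose.mulVec) := by
    intro y
    obtain ⟨x, hx⟩ := hsurj (Function.extend c y 0)
    refine ⟨x ∘ r, ?_⟩
    funext j
    have hxj : A.transpose.mulVec x (c j) = y j := by
      have := congrFun hx (c j)
      simpa [Function.Injective.extend_apply hc] using this
    rw [Matrix.mulVec, dotProduct] at hxj ⊢
    rw [← hxj]
    simp only [Matrix.transpose_apply, hB, Matrix.of_apply, Function.comp]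
    rw [← Finset.sum_image (g := r) (f := fun i => A i (c j) * x i)
      (fun a _ b _ h => hr h)]
    refine Finset.sum_subset (Finset.subset_univ _) ?_
    intro i _ hi
    have : i ∉ Set.range r := by
      intro ⟨a, ha⟩
      exact hi (Finset.mem_image.2 ⟨a, Finset.mem_univ a, ha⟩)
    rw [hzero j i this, zero_mul]
  have hunit : IsUnit B.transpose.det :=
    Matrix.isUnit_iff_isUnit_det _ |>.1 (Matrix.mulVec_surjective_iff_isUnit.1 hBsurj)
  rw [Matrix.det_transpose] at hunit
  exact Int.isUnit_iff.1 hunit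
end

section
/- Let A_Γ be the 7 × 7 symmetric integer matrix with diagonal entries (-2, -3, -2, -2, -3, -2, -2) and off-diagonal (i,j)-entry equal to 1 precisely when {i,j} is one of {1,2}, {2,3}, {3,4}, {4,5}, {3,6}, {6,7}, and 0 otherwise. For every natural number N and every integer matrix B : Matrix (Fin N) (Fin 7) ℤ satisfying Bᵀ * B = -A_Γ, there exists a subset S of Fin N with exactly 7 elements such that B i j = 0 whenever i ∉ S; moreover, the 7 × 7 submatrix of B on the rows S has determinant 5 or -5. -/
/-!
Write `G = -A_Γ = Bᵀ B` and `M = adj G = 25 G⁻¹`. For a row `r` of `B`, put `t = r ⬝ M r`.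
The vector `B (M r)` has `r`-coordinate `t` and squared norm `(M r) ⬝ G (M r) = 25 t`, so
`t ≤ 25`; summing over the rows gives `tr (M G) = 175`, hence at least seven nonzero rows.
The entries of `B` lie in `{-1, 0, 1}` since `diag G ≤ 3`, and on the finitely many such
rows with `t ≤ 25` a second form `r ⬝ C r` is at least `50`, whereas its row sum is
`tr (C G) = 350`: at most seven nonzero rows. The `7 × 7` minor on these rows then has Gram
matrix `G`, so its determinant squares to `det G = 25`.
-/

open Matrix Finset

namespace Matrix

variable {m n R : Type*} [Fintype m]

theorem sum_dotProduct_mulVec_rows [Fintype n] [CommSemiring R] (B : Matrix m n R)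
    (Q : Matrix n n R) :
    ∑ i, B i ⬝ᵥ (Q *ᵥ B i) = trace (Q * (Bᵀ * B)) := by
  rw [← Matrix.mul_assoc, trace_mul_cycle]
  exact Finset.sum_congr rfl fun i _ => dotProduct_mulVec _ _ _

theorem mulVec_dotProduct_mulVec_self [Fintype n] [CommSemiring R] (B : Matrix m n R)
    (v : n → R) :
    (B *ᵥ v) ⬝ᵥ (B *ᵥ v) = v ⬝ᵥ (Bᵀ * B) *ᵥ v := by
  rw [← mulVec_mulVec, dotProduct_transpose_mulVec]

theorem submatrix_transpose_mul_self [CommSemiring R] {k : Type*} [Fintype k]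
    (B : Matrix m n R) {f : k → m} (hf : Function.Injective f)
    (hB : ∀ i ∉ Set.range f, B i = 0) :
    (B.submatrix f id)ᵀ * B.submatrix f id = Bᵀ * B := by
  ext j l
  exact Fintype.sum_of_injective f hf _ _ (fun i hi => by simp [hB i hi]) fun _ => rfl

variable [CommRing R] [LinearOrder R] [IsStrictOrderedRing R]

theorem sq_apply_le_dotProduct_self (v : m → R) (i : m) : v i ^ 2 ≤ v ⬝ᵥ v := by
  rw [sq]
  exact single_le_sum (f := fun k => v k * v k) (fun k _ => mul_self_nonneg (v k)) (mem_univ i)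

theorem sq_apply_le_transpose_mul_self_apply (B : Matrix m n R) (i : m) (j : n) :
    B i j ^ 2 ≤ (Bᵀ * B) j j :=
  sq_apply_le_dotProduct_self (fun k => B k j) i

theorem dotProduct_mulVec_row_sq_le [Fintype n] [DecidableEq n] {B : Matrix m n R}
    {M : Matrix n n R} {d : R} (hM : Bᵀ * B * M = d • 1) (i : m) :
    (B i ⬝ᵥ M *ᵥ B i) ^ 2 ≤ d * B i ⬝ᵥ M *ᵥ B i := by
  set w := M *ᵥ B i
  calc (B i ⬝ᵥ w) ^ 2 = (B *ᵥ w) i ^ 2 := rfl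
    _ ≤ (B *ᵥ w) ⬝ᵥ (B *ᵥ w) := sq_apply_le_dotProduct_self _ i
    _ = w ⬝ᵥ (Bᵀ * B * M) *ᵥ B i := by
      rw [mulVec_dotProduct_mulVec_self, ← mulVec_mulVec (B i) (Bᵀ * B) M]
    _ = d * B i ⬝ᵥ w := by
      rw [hM, smul_mulVec, one_mulVec, dotProduct_smul, smul_eq_mul, dotProduct_comm]

end Matrix

/-- `-A_Γ`. -/
def gammaGram : Matrix (Fin 7) (Fin 7) ℤ :=
  !![2, -1, 0, 0, 0, 0, 0; -1, 3, -1, 0, 0, 0, 0; 0, -1, 2, -1, 0, -1, 0;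
     0, 0, -1, 2, -1, 0, 0; 0, 0, 0, -1, 3, 0, 0; 0, 0, -1, 0, 0, 2, -1;
     0, 0, 0, 0, 0, -1, 2]

def gammaGramAdj : Matrix (Fin 7) (Fin 7) ℤ :=
  !![18, 11, 15, 9, 3, 10, 5; 11, 22, 30, 18, 6, 20, 10; 15, 30, 75, 45, 15, 50, 25;
     9, 18, 45, 42, 14, 30, 15; 3, 6, 15, 14, 13, 10, 5; 10, 20, 50, 30, 10, 50, 25;
     5, 10, 25, 15, 5, 25, 25]

-- Obtained from the dual of the linear program bounding the number of nonzero rows.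
def gammaCert : Matrix (Fin 7) (Fin 7) ℤ :=
  !![50, 50, 30, 18, 25, 20, 10; 50, 100, 166, 114, 50, 40, 20;
     30, 166, 150, 90, 30, 100, 50; 18, 114, 90, 84, 28, 60, 30;
     25, 50, 30, 28, 50, 20, 10; 20, 40, 100, 60, 20, 100, 50;
     10, 20, 50, 30, 10, 50, 50]

theorem gammaGram_mul_gammaGramAdj : gammaGram * gammaGramAdj = (25 : ℤ) • 1 := by decide

theorem trace_gammaGramAdj_mul_gammaGram : trace (gammaGramAdj * gammaGram) = 175 := by decide

theorem trace_gammaCert_mul_gammaGram : trace (gammaCert * gammaGram) = 350 := by decide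

theorem det_gammaGram : gammaGram.det = 25 := by
  simp [det_succ_row_zero, Fin.sum_univ_succ, Fin.succAbove, gammaGram]

set_option synthInstance.maxSize 1000 in
theorem le_dotProduct_gammaCert_mulVec (r : Fin 7 → ℤ) (hr : ∀ j, r j ∈ [-1, 0, 1])
    (hr0 : r ≠ 0) (hrt : r ⬝ᵥ gammaGramAdj *ᵥ r ≤ 25) : 50 ≤ r ⬝ᵥ gammaCert *ᵥ r := by
  have key : ∀ a ∈ [-1, 0, 1], ∀ b ∈ [-1, 0, 1], ∀ c ∈ [-1, 0, 1], ∀ d ∈ [-1, 0, 1],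
      ∀ e ∈ [-1, 0, 1], ∀ f ∈ [-1, 0, 1], ∀ g ∈ [-1, 0, 1],
      ![a, b, c, d, e, f, g] ≠ 0 →
        ![a, b, c, d, e, f, g] ⬝ᵥ gammaGramAdj *ᵥ ![a, b, c, d, e, f, g] ≤ 25 →
        50 ≤ ![a, b, c, d, e, f, g] ⬝ᵥ gammaCert *ᵥ ![a, b, c, d, e, f, g] := by
    simp only [dotProduct, mulVec, Fin.sum_univ_seven, gammaGramAdj, gammaCert, of_apply,
      Matrix.cons_val, ne_eq, cons_eq_zero_iff, zero_empty, and_true]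
    decide +kernel
  have hr_eta : r = ![r 0, r 1, r 2, r 3, r 4, r 5, r 6] := by
    ext j; fin_cases j <;> rfl
  rw [hr_eta] at hr0 hrt ⊢
  exact key _ (hr 0) _ (hr 1) _ (hr 2) _ (hr 3) _ (hr 4) _ (hr 5) _ (hr 6) hr0 hrt

theorem exists_support_card_eq_seven {N : ℕ} {B : Matrix (Fin N) (Fin 7) ℤ}
    (hB : Bᵀ * B = gammaGram) : ∃ S : Finset (Fin N), #S = 7 ∧ ∀ i ∉ S, B i = 0 := by
  classical
  set S : Finset (Fin N) := {i | B i ≠ 0}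
  refine ⟨S, ?_, fun i hi => by simpa [S] using hi⟩
  have hentry (i j) : B i j ∈ [-1, 0, 1] := by
    have hsq : B i j ^ 2 < 2 ^ 2 := calc
      _ ≤ gammaGram j j := hB ▸ sq_apply_le_transpose_mul_self_apply B i j
      _ < 2 ^ 2 := by fin_cases j <;> decide
    have := abs_lt.mp (abs_lt_of_sq_lt_sq hsq zero_le_two)
    simp only [List.mem_cons, List.not_mem_nil, or_false]
    omega
  have ht (i) : B i ⬝ᵥ gammaGramAdj *ᵥ B i ≤ 25 := by
    have h := dotProduct_mulVec_row_sq_le (by rw [hB, gammaGram_mul_gammaGramAdj]) i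
    nlinarith
  have hc (i) (hi : i ∈ S) : 50 ≤ B i ⬝ᵥ gammaCert *ᵥ B i :=
    le_dotProduct_gammaCert_mulVec (B i) (hentry i) (mem_filter.mp hi).2 (ht i)
  have hsum (Q : Matrix (Fin 7) (Fin 7) ℤ) :
      ∑ i ∈ S, B i ⬝ᵥ Q *ᵥ B i = trace (Q * gammaGram) := by
    rw [← hB, ← sum_dotProduct_mulVec_rows]
    refine sum_subset (subset_univ S) fun i _ hi => ?_
    rw [show B i = 0 by simpa [S] using hi, zero_dotProduct]
  have hlow := sum_le_card_nsmul _ _ _ fun i (_ : i ∈ S) => ht i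
  have hupp := card_nsmul_le_sum _ _ _ hc
  rw [hsum, trace_gammaGramAdj_mul_gammaGram, nsmul_eq_mul] at hlow
  rw [hsum, trace_gammaCert_mul_gammaGram, nsmul_eq_mul] at hupp
  omega

/-- Any embedding of the lattice `(ℤ^7, A_Γ)` into `-ℤ^N` (encoded by an integer
matrix `B` with `Bᵀ B = -A_Γ`, the columns of `B` being the images of the spherical
basis vectors) has all its columns supported in seven common rows `S`, and the
induced `7 × 7` minor on these rows has determinant `±5`. -/
theorem stmt_8 (N : ℕ) (B : Matrix (Fin N) (Fin 7) ℤ)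
    (hB : B.transpose * B =
      -(!![-2, 1, 0, 0, 0, 0, 0;
           1, -3, 1, 0, 0, 0, 0;
           0, 1, -2, 1, 0, 1, 0;
           0, 0, 1, -2, 1, 0, 0;
           0, 0, 0, 1, -3, 0, 0;
           0, 0, 1, 0, 0, -2, 1;
           0, 0, 0, 0, 0, 1, -2] : Matrix (Fin 7) (Fin 7) ℤ)) :
    ∃ (S : Finset (Fin N)) (hS : S.card = 7),
      (∀ i ∉ S, ∀ j, B i j = 0) ∧
      (Matrix.det (Matrix.of fun a b : Fin 7 => B ((S.orderIsoOfFin hS a : Fin N)) b) = 5 ∨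
        Matrix.det (Matrix.of fun a b : Fin 7 => B ((S.orderIsoOfFin hS a : Fin N)) b) = -5) := by
  have hG : Bᵀ * B = gammaGram := hB.trans (by decide)
  obtain ⟨S, hS, hzero⟩ := exists_support_card_eq_seven hG
  refine ⟨S, hS, fun i hi => congrFun (hzero i hi), ?_⟩
  set f := S.orderEmbOfFin hS
  have hrange : ∀ i ∉ Set.range f, B i = 0 := fun i hi =>
    hzero i (by rwa [range_orderEmbOfFin] at hi)
  have hdet : (B.submatrix f id).det ^ 2 = 5 ^ 2 :=
    calc _ = ((B.submatrix f id)ᵀ * B.submatrix f id).det := by rw [det_mul, det_transpose, sq]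
      _ = 5 ^ 2 := by
        rw [submatrix_transpose_mul_self B f.injective hrange, hG, det_gammaGram]; norm_num
  exact sq_eq_sq_iff_eq_or_eq_neg.mp hdet
end

section
/- Let n ≥ 2, let p_1, …, p_n be integers with each p_i ≥ 2, and let q ≥ 1 be an integer. Let G be the square integer matrix of size V = 1 + Σ_i (p_i - 1) + 1 defined as the weighted adjacency matrix of the following star-shaped graph: a central vertex v_0 of weight -n; for each i, a chain of p_i - 1 vertices of weight -2, with v_0 adjacent to the first vertex of the chain and consecutive chain vertices adjacent; and one further vertex u of weight -q adjacent to v_0 (diagonal entries of G are the weights, the off-diagonal entry for a pair of vertices is 1 if they are adjacent and 0 otherwise). If there exist a natural number N and an integer matrix B : Matrix (Fin N) (Fin V) ℤ such that Bᵀ * B = -G and the ℤ-linear map ℤ^N → ℤ^V, x ↦ Bᵀ.mulVec x, is surjective, then q > min{p_1, …, p_n}. -/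
/-- Vertex set of the star-shaped plumbing graph for the pretzel link
`P(p_1,…,p_n,-q)`: the central vertex, the chain vertices (for each `i`, a chain
of `p_i - 1` vertices), and the extra vertex `u` of weight `-q`. -/
def PretzelVertex (n : ℕ) (p : Fin n → ℕ) : Type :=
  Unit ⊕ ((i : Fin n) × Fin (p i - 1)) ⊕ Unit

/-- The weighted adjacency matrix of the star-shaped graph: the central vertex has
weight `-n` and is adjacent to the first vertex of each chain and to `u`;
consecutive chain vertices are adjacent and have weight `-2`; `u` has weight `-q`. -/
def pretzelMatrix (n : ℕ) (p : Fin n → ℕ) (q : ℕ) :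
    Matrix (PretzelVertex n p) (PretzelVertex n p) ℤ :=
  fun a b =>
    match a, b with
    | Sum.inl _, Sum.inl _ => -(n : ℤ)
    | Sum.inl _, Sum.inr (Sum.inl ⟨_, j⟩) => if (j : ℕ) = 0 then 1 else 0
    | Sum.inr (Sum.inl ⟨_, j⟩), Sum.inl _ => if (j : ℕ) = 0 then 1 else 0
    | Sum.inl _, Sum.inr (Sum.inr _) => 1
    | Sum.inr (Sum.inr _), Sum.inl _ => 1
    | Sum.inr (Sum.inl ⟨i, j⟩), Sum.inr (Sum.inl ⟨i', j'⟩) =>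
        if (i : ℕ) = (i' : ℕ) then
          (if (j : ℕ) = (j' : ℕ) then -2
           else if (j : ℕ) + 1 = (j' : ℕ) ∨ (j' : ℕ) + 1 = (j : ℕ) then 1 else 0)
        else 0
    | Sum.inr (Sum.inl _), Sum.inr (Sum.inr _) => 0
    | Sum.inr (Sum.inr _), Sum.inr (Sum.inl _) => 0
    | Sum.inr (Sum.inr _), Sum.inr (Sum.inr _) => -(q : ℤ)

/-!
Let `b v ∈ ℤ^N` be the image of the vertex `v`, so that `b v ⬝ b w = -G v w`. In each chain of
`(-2)`-vertices the partial sums `z t = x 0 + ⋯ + x t` have norm `2` and pairwise products `1`.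
Norm-`2` integer vectors are `±e a ± e b`; a triangle `±e a ± e b, ±e b ± e c, ±e a ± e c` is
excluded because each `z t` pairs oddly with the central vector, so all `z t` share a coordinate:
`z t = ±e A ± e (c t)`. Surjectivity of the dual map makes the coordinate sets `T i` of different
chains disjoint, and `#T i = p i`. The central vector has norm `n` and mass at least `1` on each
`T i`, hence lives on `⋃ T i`; it pairs to `-1` with the extra vector `u`, which is orthogonal to
every `z t`, so `u` has mass at least `p k` on some `T k`. If `q ≤ p k`, then `u` lives on `T k`
and `u ⬝ y` is a multiple of `p k` for every `y` orthogonal to the chains, contradicting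
surjectivity.
-/

open Matrix Finset

namespace IntVec

variable {ι : Type*}

section Fintype

variable [Fintype ι]

theorem apply_eq_zero_of_dotProduct_self_le [DecidableEq ι] {f : ι → ℤ} {S : Finset ι}
    (h : f ⬝ᵥ f ≤ ∑ w ∈ S, f w * f w) {w : ι} (hw : w ∉ S) : f w = 0 := by
  have hsplit := sum_sdiff (f := fun w => f w * f w) (subset_univ S)
  have hrest : ∑ w ∈ univ \ S, f w * f w = 0 :=
    le_antisymm (by rw [dotProduct] at h; linarith) (sum_nonneg fun _ _ => mul_self_nonneg _)
  exact mul_self_eq_zero.mp <|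
    (sum_eq_zero_iff_of_nonneg fun _ _ => mul_self_nonneg _).mp hrest w (by simpa using hw)

theorem dotProduct_eq_sum_of_eq_zero {x : ι → ℤ} {S : Finset ι} (hx : ∀ w ∉ S, x w = 0)
    (y : ι → ℤ) : x ⬝ᵥ y = ∑ w ∈ S, x w * y w :=
  (sum_subset (subset_univ S) fun w _ hw => by rw [hx w hw, zero_mul]).symm

theorem even_dotProduct {x : ι → ℤ} (hx : ∀ w, Even (x w)) (y : ι → ℤ) : Even (x ⬝ᵥ y) :=
  even_sum _ fun w _ => (hx w).mul_right _

variable {x y z : ι → ℤ}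

theorem apply_mem_of_dotProduct_self_eq_two (hx : x ⬝ᵥ x = 2) (w : ι) :
    x w = 0 ∨ x w = 1 ∨ x w = -1 := by
  have : x w * x w ≤ 2 := hx ▸ single_le_sum (fun w _ => mul_self_nonneg (x w)) (mem_univ w)
  have : -1 ≤ x w ∧ x w ≤ 1 := by constructor <;> nlinarith
  omega

theorem sq_apply_eq_one (hx : x ⬝ᵥ x = 2) {w : ι} (hw : x w ≠ 0) : x w ^ 2 = 1 := by
  rcases apply_mem_of_dotProduct_self_eq_two hx w with h | h | h <;> simp_all

theorem odd_apply (hx : x ⬝ᵥ x = 2) {w : ι} (hw : x w ≠ 0) : Odd (x w) := by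
  rcases apply_mem_of_dotProduct_self_eq_two hx w with h | h | h <;> simp_all

theorem exists_apply_ne_zero (hx : x ⬝ᵥ x = 2) : ∃ a, x a ≠ 0 := by
  by_contra! h
  simp [dotProduct, h] at hx

theorem apply_eq_zero_of_ne_zero_of_ne_zero [DecidableEq ι] (hx : x ⬝ᵥ x = 2) {a b : ι}
    (hab : a ≠ b) (ha : x a ≠ 0) (hb : x b ≠ 0) {w : ι} (hwa : w ≠ a) (hwb : w ≠ b) : x w = 0 := by
  refine apply_eq_zero_of_dotProduct_self_le (S := {a, b}) ?_ (by simp [hwa, hwb])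
  rw [sum_pair hab, ← sq, ← sq, hx, sq_apply_eq_one hx ha, sq_apply_eq_one hx hb]
  norm_num

theorem exists_ne_apply_ne_zero [DecidableEq ι] (hx : x ⬝ᵥ x = 2) {a : ι} (ha : x a ≠ 0) :
    ∃ b, b ≠ a ∧ x b ≠ 0 := by
  have hsq := sq_apply_eq_one hx ha
  by_contra! h
  rw [dotProduct, sum_eq_single_of_mem a (mem_univ a) fun w _ hw => by rw [h w hw, zero_mul],
    ← sq, hsq] at hx
  norm_num at hx

theorem exists_eq_of_dotProduct_eq_one [DecidableEq ι] (hx : x ⬝ᵥ x = 2) (hy : y ⬝ᵥ y = 2)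
    (hxy : x ⬝ᵥ y = 1) : ∃ c, x c ≠ 0 ∧ y c = x c ∧ ∀ w, w ≠ c → x w * y w = 0 := by
  obtain ⟨a, ha⟩ := exists_apply_ne_zero hx
  obtain ⟨b, hba, hb⟩ := exists_ne_apply_ne_zero hx ha
  have hx0 : ∀ w, w ≠ a → w ≠ b → x w = 0 := fun _ =>
    apply_eq_zero_of_ne_zero_of_ne_zero hx hba.symm ha hb
  rw [dotProduct_eq_sum_of_eq_zero (S := {a, b}) (by simpa using hx0), sum_pair hba.symm] at hxy
  have hcases : (y a = x a ∧ y b = 0) ∨ (y b = x b ∧ y a = 0) := by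
    rcases apply_mem_of_dotProduct_self_eq_two hx a with h1 | h1 | h1 <;>
    rcases apply_mem_of_dotProduct_self_eq_two hx b with h2 | h2 | h2 <;>
    rcases apply_mem_of_dotProduct_self_eq_two hy a with h3 | h3 | h3 <;>
    rcases apply_mem_of_dotProduct_self_eq_two hy b with h4 | h4 | h4 <;>
    simp_all
  rcases hcases with ⟨h1, h2⟩ | ⟨h1, h2⟩
  · refine ⟨a, ha, h1, fun w hwa => ?_⟩
    by_cases hwb : w = b
    · simp [hwb, h2]
    · simp [hx0 w hwa hwb]
  · refine ⟨b, hb, h1, fun w hwb => ?_⟩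
    by_cases hwa : w = a
    · simp [hwa, h2]
    · simp [hx0 w hwa hwb]

theorem mul_apply_eq_zero_of_dotProduct_eq_zero [DecidableEq ι] (hx : x ⬝ᵥ x = 2)
    (hy : y ⬝ᵥ y = 2) (hxy : x ⬝ᵥ y = 0) {v : ι → ℤ} (hv : Odd (x ⬝ᵥ v + y ⬝ᵥ v)) (c : ι) :
    x c * y c = 0 := by
  by_contra h
  obtain ⟨hxc, hyc⟩ := mul_ne_zero_iff.mp h
  obtain ⟨a, hac, hxa⟩ := exists_ne_apply_ne_zero hx hxc
  have hx0 : ∀ w, w ≠ c → w ≠ a → x w = 0 := fun _ =>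
    apply_eq_zero_of_ne_zero_of_ne_zero hx hac.symm hxc hxa
  rw [dotProduct_eq_sum_of_eq_zero (S := {c, a}) (by simpa using hx0), sum_pair hac.symm] at hxy
  have hya : y a ≠ 0 := by rintro hya; simp [hya, h] at hxy
  have hy0 : ∀ w, w ≠ c → w ≠ a → y w = 0 := fun _ =>
    apply_eq_zero_of_ne_zero_of_ne_zero hy hac.symm hyc hya
  -- `x` and `y` are `±1` on the same two coordinates, so `x + y` is even.
  have heven : ∀ w, Even ((x + y) w) := by
    intro w
    by_cases hw : w = c ∨ w = a
    · rcases hw with rfl | rfl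
      exacts [(odd_apply hx hxc).add_odd (odd_apply hy hyc),
        (odd_apply hx hxa).add_odd (odd_apply hy hya)]
    · push Not at hw
      simp [hx0 w hw.1 hw.2, hy0 w hw.1 hw.2]
  exact (Int.not_even_iff_odd.mpr hv) (add_dotProduct x y v ▸ even_dotProduct heven v)

theorem apply_eq_of_pairwise_dotProduct_eq_one [DecidableEq ι] (hx : x ⬝ᵥ x = 2)
    (hy : y ⬝ᵥ y = 2) (hz : z ⬝ᵥ z = 2) (hxy : x ⬝ᵥ y = 1) (hxz : x ⬝ᵥ z = 1)
    (hyz : y ⬝ᵥ z = 1) {v : ι → ℤ} (hv : Odd (x ⬝ᵥ v + y ⬝ᵥ v + z ⬝ᵥ v)) {c : ι}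
    (hxc : x c ≠ 0) (hyc : y c = x c) : z c = x c := by
  have hxy0 : ∀ w, w ≠ c → x w * y w = 0 := by
    obtain ⟨c', -, -, h⟩ := exists_eq_of_dotProduct_eq_one hx hy hxy
    obtain rfl : c' = c := by
      by_contra hc
      exact mul_ne_zero hxc (hyc ▸ hxc) (h c (Ne.symm hc))
    exact h
  obtain ⟨d, hxd, hzd, hxz0⟩ := exists_eq_of_dotProduct_eq_one hx hz hxz
  by_contra hzc
  have hdc : d ≠ c := by rintro rfl; exact hzc hzd
  have hzc0 : z c = 0 := (mul_eq_zero.mp (hxz0 c hdc.symm)).resolve_left hxc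
  obtain ⟨f, hyf, hzf, -⟩ := exists_eq_of_dotProduct_eq_one hy hz hyz
  have hfc : f ≠ c := by rintro rfl; exact hyf (hzf ▸ hzc0)
  have hyd : y d = 0 := (mul_eq_zero.mp (hxy0 d hdc)).resolve_left hxd
  have hxf : x f = 0 := (mul_eq_zero.mp (hxy0 f hfc)).resolve_right hyf
  have hdf : d ≠ f := by rintro rfl; exact hxd hxf
  -- The three vectors are supported on the edges of the triangle `c d f`,
  -- so `x + y + z` is even.
  have heven : ∀ w, Even ((x + y + z) w) := by
    intro w
    by_cases hw : w = c ∨ w = d ∨ w = f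
    · rcases hw with rfl | rfl | rfl
      · exact ⟨x w, by simp [hyc, hzc0]⟩
      · exact ⟨x w, by simp [hyd, hzd]⟩
      · exact ⟨y w, by simp [hxf, hzf]⟩
    · push Not at hw
      simp [apply_eq_zero_of_ne_zero_of_ne_zero hx hdc.symm hxc hxd hw.1 hw.2.1,
        apply_eq_zero_of_ne_zero_of_ne_zero hy hfc.symm (hyc ▸ hxc) hyf hw.1 hw.2.2,
        apply_eq_zero_of_ne_zero_of_ne_zero hz hdf (hzd ▸ hxd) (hzf ▸ hyf) hw.2.1 hw.2.2]
  exact (Int.not_even_iff_odd.mpr hv)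
    (by simpa only [add_dotProduct] using even_dotProduct heven v)

end Fintype

variable {L : ℕ} {z : Fin L → ι → ℤ}

/-- `z t = σ • e A + ε t • e (c t)` with `σ, ε t = ±1` and pairwise distinct `c t ≠ A`. -/
structure IsStar (z : Fin L → ι → ℤ) (A : ι) (σ : ℤ) (c : Fin L → ι) : Prop where
  sq_hub : σ ^ 2 = 1
  apply_hub : ∀ t, z t A = σ
  sq_leaf : ∀ t, z t (c t) ^ 2 = 1
  leaf_ne_hub : ∀ t, c t ≠ A
  injective : Function.Injective c
  apply_eq_zero : ∀ t w, w ≠ A → w ≠ c t → z t w = 0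

def starSupport [DecidableEq ι] (A : ι) (c : Fin L → ι) : Finset ι := insert A (univ.image c)

variable {A : ι} {σ : ℤ} {c : Fin L → ι}

theorem IsStar.exists_ne_zero_of_mem [DecidableEq ι] [NeZero L] (h : IsStar z A σ c) {w : ι}
    (hw : w ∈ starSupport A c) : ∃ t, z t w ≠ 0 := by
  simp only [starSupport, mem_insert, mem_image, mem_univ, true_and] at hw
  rcases hw with rfl | ⟨t, rfl⟩
  · exact ⟨0, by rw [h.apply_hub]; rintro rfl; simpa using h.sq_hub⟩
  · exact ⟨t, fun h0 => by simpa [h0] using h.sq_leaf t⟩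

variable [Fintype ι]

theorem exists_forall_apply_eq [DecidableEq ι] [NeZero L] (h2 : ∀ t, z t ⬝ᵥ z t = 2)
    (h1 : Pairwise fun t s => z t ⬝ᵥ z s = 1) {v : ι → ℤ} (hv : ∀ t, Odd (z t ⬝ᵥ v)) :
    ∃ A, z 0 A ≠ 0 ∧ ∀ t, z t A = z 0 A := by
  by_cases hL : ∃ t₁ : Fin L, t₁ ≠ 0
  · obtain ⟨t₁, ht₁⟩ := hL
    obtain ⟨A, hA, hA₁, -⟩ := exists_eq_of_dotProduct_eq_one (h2 0) (h2 t₁) (h1 ht₁.symm)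
    refine ⟨A, hA, fun t => ?_⟩
    by_cases ht : t = 0 ∨ t = t₁
    · rcases ht with rfl | rfl
      exacts [rfl, hA₁]
    · push Not at ht
      exact apply_eq_of_pairwise_dotProduct_eq_one (h2 0) (h2 t₁) (h2 t) (h1 ht₁.symm)
        (h1 (Ne.symm ht.1)) (h1 (Ne.symm ht.2)) (((hv 0).add_odd (hv t₁)).add_odd (hv t)) hA hA₁
  · push Not at hL
    obtain ⟨A, hA⟩ := exists_apply_ne_zero (h2 0)
    exact ⟨A, hA, fun t => by rw [hL t]⟩

namespace IsStar

theorem dotProduct_eq [DecidableEq ι] (h : IsStar z A σ c) (t : Fin L) (y : ι → ℤ) :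
    z t ⬝ᵥ y = σ * y A + z t (c t) * y (c t) := by
  rw [dotProduct_eq_sum_of_eq_zero (S := {A, c t}) (by simpa using h.apply_eq_zero t),
    sum_pair (h.leaf_ne_hub t).symm, h.apply_hub]

theorem dotProduct_self [DecidableEq ι] (h : IsStar z A σ c) (t : Fin L) : z t ⬝ᵥ z t = 2 := by
  rw [h.dotProduct_eq, h.apply_hub, ← sq, ← sq, h.sq_hub, h.sq_leaf]
  norm_num

theorem sum_mul_eq [DecidableEq ι] (h : IsStar z A σ c) {y y' : ι → ℤ} {r r' : ℤ}
    (hy : ∀ t, z t ⬝ᵥ y = r) (hy' : ∀ t, z t ⬝ᵥ y' = r') :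
    ∑ w ∈ starSupport A c, y w * y' w
      = σ * y A * (σ * y' A) + L * ((r - σ * y A) * (r' - σ * y' A)) := by
  have hleaf : ∀ t, y (c t) * y' (c t) = (r - σ * y A) * (r' - σ * y' A) := fun t => by
    rw [← hy t, ← hy' t, h.dotProduct_eq, h.dotProduct_eq]
    linear_combination (-(y (c t) * y' (c t))) * h.sq_leaf t
  have hσ : y A * y' A = σ * y A * (σ * y' A) := by linear_combination (-(y A * y' A)) * h.sq_hub
  rw [starSupport, sum_insert (by simpa using fun t => h.leaf_ne_hub t),
    sum_image fun t _ s _ hts => h.injective hts]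
  simp [hleaf, hσ]

end IsStar

theorem exists_isStar [DecidableEq ι] [NeZero L] (h2 : ∀ t, z t ⬝ᵥ z t = 2)
    (h1 : Pairwise fun t s => z t ⬝ᵥ z s = 1) {v : ι → ℤ} (hv : ∀ t, Odd (z t ⬝ᵥ v)) :
    ∃ A σ c, IsStar z A σ c := by
  obtain ⟨A, hA, hzA⟩ := exists_forall_apply_eq h2 h1 hv
  have hleaf : ∀ t, ∃ c, c ≠ A ∧ z t c ≠ 0 := fun t =>
    exists_ne_apply_ne_zero (h2 t) (hzA t ▸ hA)
  choose c hcA hc using hleaf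
  have hz0 : ∀ t w, w ≠ A → w ≠ c t → z t w = 0 := fun t _ =>
    apply_eq_zero_of_ne_zero_of_ne_zero (h2 t) (hcA t).symm (hzA t ▸ hA) (hc t)
  refine ⟨A, z 0 A, c, sq_apply_eq_one (h2 0) hA, hzA, fun t => sq_apply_eq_one (h2 t) (hc t),
    hcA, fun t s hts => ?_, hz0⟩
  -- If `c t = c s`, then `z t ⬝ᵥ z s = σ ^ 2 ± 1 ≠ 1`.
  by_contra hne
  have : z t ⬝ᵥ z s = 1 := h1 hne
  rw [dotProduct_eq_sum_of_eq_zero (S := {A, c t}) (by simpa using hz0 t), sum_pair (hcA t).symm,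
    hzA t, hzA s, ← sq, sq_apply_eq_one (h2 0) hA, hts] at this
  have hct : z t (c s) ≠ 0 := hts ▸ hc t
  rcases apply_mem_of_dotProduct_self_eq_two (h2 t) (c s) with h | h | h <;>
  rcases apply_mem_of_dotProduct_self_eq_two (h2 s) (c s) with h' | h' | h' <;>
  simp_all

theorem IsStar.disjoint [DecidableEq ι] [NeZero L] {L' : ℕ} [NeZero L']
    {z' : Fin L' → ι → ℤ} {A' : ι} {σ' : ℤ} {c' : Fin L' → ι} (h : IsStar z A σ c)
    (h' : IsStar z' A' σ' c') (horth : ∀ t s, z t ⬝ᵥ z' s = 0)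
    (hodd : ∀ t s, ∃ v, Odd (z t ⬝ᵥ v + z' s ⬝ᵥ v)) :
    Disjoint (starSupport A c) (starSupport A' c') := by
  refine disjoint_left.mpr fun w hw hw' => ?_
  obtain ⟨t, ht⟩ := h.exists_ne_zero_of_mem hw
  obtain ⟨s, hs⟩ := h'.exists_ne_zero_of_mem hw'
  obtain ⟨v, hv⟩ := hodd t s
  exact mul_ne_zero ht hs <| mul_apply_eq_zero_of_dotProduct_eq_zero (h.dotProduct_self t)
    (h'.dotProduct_self s) (horth t s) hv w

theorem apply_eq_zero_of_notMem_biUnion [DecidableEq ι] {κ : Type*} [Fintype κ]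
    {T : κ → Finset ι} (hT : Pairwise fun i j => Disjoint (T i) (T j)) {f : ι → ℤ}
    (h1 : ∀ i, 1 ≤ ∑ w ∈ T i, f w * f w) (hf : f ⬝ᵥ f ≤ Fintype.card κ) {w : ι}
    (hw : w ∉ univ.biUnion T) : f w = 0 := by
  refine apply_eq_zero_of_dotProduct_self_le (hf.trans ?_) hw
  rw [sum_biUnion (hT.set_pairwise _)]
  simpa using sum_le_sum fun i (_ : i ∈ univ) => h1 i

section Chain

variable {x : ℕ → ι → ℤ}

theorem sum_range_dotProduct_of_forall_ne_zero {y : ι → ℤ} {t : ℕ}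
    (h : ∀ j ≤ t, j ≠ 0 → x j ⬝ᵥ y = 0) : (∑ j ∈ range (t + 1), x j) ⬝ᵥ y = x 0 ⬝ᵥ y := by
  rw [sum_dotProduct, sum_eq_single_of_mem 0 (by simp)]
  exact fun j hj hj0 => h j (by simpa [Nat.lt_succ_iff] using hj) hj0

/-- The Gram matrix of `x 0, …, x (L - 1)` is the Cartan matrix of `A_L`. -/
def IsChain (L : ℕ) (x : ℕ → ι → ℤ) : Prop :=
  ∀ j < L, ∀ k < L, x j ⬝ᵥ x k = if j = k then 2 else if j + 1 = k ∨ k + 1 = j then -1 else 0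

theorem sum_range_dotProduct_of_lt (hx : IsChain L x) {t k : ℕ} (htk : t < k) (hk : k < L) :
    (∑ j ∈ range (t + 1), x j) ⬝ᵥ x k = if k = t + 1 then -1 else 0 := by
  rw [sum_dotProduct, sum_eq_single_of_mem t (self_mem_range_succ t)]
  · rw [hx t (by omega) k hk]
    split_ifs <;> omega
  · intro j hj hjt
    rw [mem_range] at hj
    rw [hx j (by omega) k hk]
    split_ifs <;> omega

theorem sum_range_dotProduct_self (hx : IsChain L x) {t : ℕ} (ht : t < L) :
    (∑ j ∈ range (t + 1), x j) ⬝ᵥ ∑ j ∈ range (t + 1), x j = 2 := by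
  induction t with
  | zero => simpa using hx 0 ht 0 ht
  | succ t ih =>
    have hlt := sum_range_dotProduct_of_lt hx (Nat.lt_succ_self t) ht
    rw [sum_range_succ _ (t + 1), add_dotProduct, dotProduct_add, dotProduct_add,
      ih (by omega), dotProduct_comm (x _), hlt, hx _ ht _ ht]
    simp

theorem sum_range_dotProduct_sum_range_of_lt (hx : IsChain L x) {t s : ℕ} (hts : t < s)
    (hs : s < L) :
    (∑ j ∈ range (t + 1), x j) ⬝ᵥ ∑ j ∈ range (s + 1), x j = 1 := by
  induction s, hts using Nat.le_induction with
  | base =>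
    rw [sum_range_succ _ (t + 1), dotProduct_add, sum_range_dotProduct_self hx (by omega),
      sum_range_dotProduct_of_lt hx (Nat.lt_succ_self t) hs]
    simp
  | succ s hts ih =>
    rw [sum_range_succ _ (s + 1), dotProduct_add, ih (by omega),
      sum_range_dotProduct_of_lt hx (by omega) hs, if_neg (by omega)]
    simp

end Chain

end IntVec

namespace PretzelVertex

variable {n : ℕ} {p : Fin n → ℕ}

def center : PretzelVertex n p := Sum.inl ()

def extra : PretzelVertex n p := Sum.inr (Sum.inr ())

def chain (i : Fin n) (j : Fin (p i - 1)) : PretzelVertex n p := Sum.inr (Sum.inl ⟨i, j⟩)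

end PretzelVertex

open IntVec PretzelVertex

section Pretzel

variable {n : ℕ} {p : Fin n → ℕ} {q : ℕ} {ι : Type*} [Fintype ι]
  {b : PretzelVertex n p → ι → ℤ}

/-- Extended by `0` past the end of the chain. -/
def chainVec (b : PretzelVertex n p → ι → ℤ) (i : Fin n) (j : ℕ) : ι → ℤ :=
  if h : j < p i - 1 then b (chain i ⟨j, h⟩) else 0

def chainSum (b : PretzelVertex n p → ι → ℤ) (i : Fin n) (t : ℕ) : ι → ℤ :=
  ∑ j ∈ range (t + 1), chainVec b i j

theorem dotProduct_center_self (hb : ∀ v w, b v ⬝ᵥ b w = -pretzelMatrix n p q v w) :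
    b center ⬝ᵥ b center = n := by
  simpa [pretzelMatrix, center] using hb center center

theorem dotProduct_extra_self (hb : ∀ v w, b v ⬝ᵥ b w = -pretzelMatrix n p q v w) :
    b extra ⬝ᵥ b extra = q := by
  simpa [pretzelMatrix, extra] using hb extra extra

theorem dotProduct_center_extra (hb : ∀ v w, b v ⬝ᵥ b w = -pretzelMatrix n p q v w) :
    b center ⬝ᵥ b extra = -1 := by
  simpa [pretzelMatrix, center, extra] using hb center extra

theorem isChain_chainVec (hb : ∀ v w, b v ⬝ᵥ b w = -pretzelMatrix n p q v w) (i : Fin n) :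
    IsChain (p i - 1) (chainVec b i) := by
  intro j hj k hk
  rw [chainVec, chainVec, dif_pos hj, dif_pos hk, hb]
  simp only [pretzelMatrix, chain]
  split_ifs <;> simp_all

theorem chainVec_dotProduct_chainVec_of_ne (hb : ∀ v w, b v ⬝ᵥ b w = -pretzelMatrix n p q v w)
    {i i' : Fin n} (hi : i ≠ i') (j k : ℕ) : chainVec b i j ⬝ᵥ chainVec b i' k = 0 := by
  unfold chainVec
  split_ifs
  · rw [hb]
    simp [pretzelMatrix, chain, Fin.val_inj, hi]
  all_goals simp

theorem chainVec_dotProduct_center (hb : ∀ v w, b v ⬝ᵥ b w = -pretzelMatrix n p q v w)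
    {i : Fin n} {j : ℕ} (hj : j ≠ 0) : chainVec b i j ⬝ᵥ b center = 0 := by
  unfold chainVec
  split_ifs
  · rw [hb]
    simp [pretzelMatrix, chain, center, hj]
  · simp

theorem chainVec_dotProduct_extra (hb : ∀ v w, b v ⬝ᵥ b w = -pretzelMatrix n p q v w)
    (i : Fin n) (j : ℕ) : chainVec b i j ⬝ᵥ b extra = 0 := by
  unfold chainVec
  split_ifs
  · rw [hb]
    simp [pretzelMatrix, chain, extra]
  · simp

theorem chainSum_dotProduct_center (hb : ∀ v w, b v ⬝ᵥ b w = -pretzelMatrix n p q v w)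
    {i : Fin n} (hi : 2 ≤ p i) (t : ℕ) : chainSum b i t ⬝ᵥ b center = -1 := by
  rw [chainSum, sum_range_dotProduct_of_forall_ne_zero fun j _ hj =>
    chainVec_dotProduct_center hb hj, chainVec, dif_pos (by omega), hb]
  simp [pretzelMatrix, chain, center]

theorem chainSum_dotProduct_extra (hb : ∀ v w, b v ⬝ᵥ b w = -pretzelMatrix n p q v w)
    (i : Fin n) (t : ℕ) : chainSum b i t ⬝ᵥ b extra = 0 := by
  simp [chainSum, sum_dotProduct, chainVec_dotProduct_extra hb]

theorem chainSum_dotProduct_chainSum_of_ne (hb : ∀ v w, b v ⬝ᵥ b w = -pretzelMatrix n p q v w)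
    {i i' : Fin n} (hi : i ≠ i') (t s : ℕ) : chainSum b i t ⬝ᵥ chainSum b i' s = 0 := by
  simp [chainSum, sum_dotProduct, dotProduct_sum, chainVec_dotProduct_chainVec_of_ne hb hi]

theorem exists_isStar_chainSum [DecidableEq ι]
    (hb : ∀ v w, b v ⬝ᵥ b w = -pretzelMatrix n p q v w) {i : Fin n} (hi : 2 ≤ p i) :
    ∃ A σ c, IsStar (fun t : Fin (p i - 1) => chainSum b i t) A σ c := by
  have : NeZero (p i - 1) := ⟨by omega⟩
  have hx := isChain_chainVec hb i
  refine exists_isStar (fun t => sum_range_dotProduct_self hx t.2)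
    (fun t s hts => ?_) (v := b center) fun t => by
      rw [chainSum_dotProduct_center hb hi]
      decide
  rcases lt_or_gt_of_ne (Fin.val_ne_of_ne hts) with h | h
  · exact sum_range_dotProduct_sum_range_of_lt hx h s.2
  · rw [dotProduct_comm]
    exact sum_range_dotProduct_sum_range_of_lt hx h t.2

theorem exists_chainSum_dotProduct_eq_ite (hp : ∀ i, 2 ≤ p i)
    (hsurj : ∀ φ : PretzelVertex n p → ℤ, ∃ y, ∀ v, b v ⬝ᵥ y = φ v) (i₀ : Fin n) :
    ∃ y, ∀ i t, chainSum b i t ⬝ᵥ y = if i = i₀ then 1 else 0 := by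
  obtain ⟨y, hy⟩ := hsurj <| Sum.elim 0 <|
    Sum.elim (fun s => if s.1 = i₀ ∧ (s.2 : ℕ) = 0 then 1 else 0) 0
  refine ⟨y, fun i t => ?_⟩
  rw [chainSum, sum_range_dotProduct_of_forall_ne_zero fun j _ hj => ?_, chainVec,
    dif_pos (by have := hp i; omega), hy]
  · simp [chain]
  · unfold chainVec
    split_ifs
    · rw [hy]
      simp [chain, hj]
    · simp

theorem exists_chainSum_dotProduct_eq_zero
    (hsurj : ∀ φ : PretzelVertex n p → ℤ, ∃ y, ∀ v, b v ⬝ᵥ y = φ v) :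
    ∃ y, (∀ i t, chainSum b i t ⬝ᵥ y = 0) ∧ b extra ⬝ᵥ y = 1 := by
  obtain ⟨y, hy⟩ := hsurj <| Sum.elim 0 <| Sum.elim 0 1
  refine ⟨y, fun i t => ?_, hy extra⟩
  rw [chainSum, sum_dotProduct]
  refine sum_eq_zero fun j _ => ?_
  unfold chainVec
  split_ifs
  · rw [hy]
    simp [chain]
  · simp

section Stars

variable [DecidableEq ι] {A : Fin n → ι} {σ : Fin n → ℤ} {c : (i : Fin n) → Fin (p i - 1) → ι}

theorem pairwise_disjoint_starSupport (hp : ∀ i, 2 ≤ p i)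
    (hb : ∀ v w, b v ⬝ᵥ b w = -pretzelMatrix n p q v w)
    (hsurj : ∀ φ : PretzelVertex n p → ℤ, ∃ y, ∀ v, b v ⬝ᵥ y = φ v)
    (hstar : ∀ i, IsStar (fun t : Fin (p i - 1) => chainSum b i t) (A i) (σ i) (c i)) :
    Pairwise fun i j => Disjoint (starSupport (A i) (c i)) (starSupport (A j) (c j)) := by
  intro i i' hi
  have (i : Fin n) : NeZero (p i - 1) := ⟨by have := hp i; omega⟩
  obtain ⟨y, hy⟩ := exists_chainSum_dotProduct_eq_ite hp hsurj i
  exact (hstar i).disjoint (hstar i') (fun t s => chainSum_dotProduct_chainSum_of_ne hb hi t s)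
    fun _ _ => ⟨y, by simp [hy, hi.symm]⟩

theorem center_eq_zero_of_notMem_biUnion (hp : ∀ i, 2 ≤ p i)
    (hb : ∀ v w, b v ⬝ᵥ b w = -pretzelMatrix n p q v w)
    (hstar : ∀ i, IsStar (fun t : Fin (p i - 1) => chainSum b i t) (A i) (σ i) (c i))
    (hT : Pairwise fun i j => Disjoint (starSupport (A i) (c i)) (starSupport (A j) (c j)))
    {w : ι} (hw : w ∉ univ.biUnion fun i => starSupport (A i) (c i)) : b center w = 0 := by
  refine apply_eq_zero_of_notMem_biUnion (f := b center) hT (fun i => ?_)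
    (by simp [dotProduct_center_self hb]) hw
  have hcenter t := chainSum_dotProduct_center hb (hp i) t
  rw [(hstar i).sum_mul_eq (fun t => hcenter t) (fun t => hcenter t)]
  have hL : (1 : ℤ) ≤ (p i - 1 : ℕ) := by have := hp i; omega
  rcases eq_or_ne (σ i * b center (A i)) 0 with h | h
  · simp [h, hL]
  · nlinarith [Int.one_le_abs h, abs_mul_abs_self (σ i * b center (A i))]

theorem exists_extra_apply_ne_zero (hp : ∀ i, 2 ≤ p i)
    (hb : ∀ v w, b v ⬝ᵥ b w = -pretzelMatrix n p q v w)
    (hstar : ∀ i, IsStar (fun t : Fin (p i - 1) => chainSum b i t) (A i) (σ i) (c i))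
    (hT : Pairwise fun i j => Disjoint (starSupport (A i) (c i)) (starSupport (A j) (c j))) :
    ∃ k, b extra (A k) ≠ 0 := by
  by_contra! h
  have hzero i : ∑ w ∈ starSupport (A i) (c i), b center w * b extra w = 0 := by
    rw [(hstar i).sum_mul_eq (fun t => chainSum_dotProduct_center hb (hp i) t)
      (fun t => chainSum_dotProduct_extra hb i t), h]
    ring
  have := dotProduct_center_extra hb
  rw [dotProduct_eq_sum_of_eq_zero fun _ => center_eq_zero_of_notMem_biUnion hp hb hstar hT,
    sum_biUnion (hT.set_pairwise _), sum_eq_zero fun i _ => hzero i] at this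
  norm_num at this

theorem extra_eq_zero_of_notMem (hp : ∀ i, 2 ≤ p i)
    (hb : ∀ v w, b v ⬝ᵥ b w = -pretzelMatrix n p q v w)
    (hstar : ∀ i, IsStar (fun t : Fin (p i - 1) => chainSum b i t) (A i) (σ i) (c i))
    {k : Fin n} (hk : b extra (A k) ≠ 0) (hqk : q ≤ p k) {w : ι}
    (hw : w ∉ starSupport (A k) (c k)) : b extra w = 0 := by
  refine apply_eq_zero_of_dotProduct_self_le ?_ hw
  have hextra t := chainSum_dotProduct_extra hb k t
  rw [dotProduct_extra_self hb, (hstar k).sum_mul_eq (fun t => hextra t) (fun t => hextra t),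
    Nat.cast_sub (by have := hp k; omega)]
  calc (q : ℤ) ≤ p k := by exact_mod_cast hqk
    _ ≤ p k * (b extra (A k) * b extra (A k)) :=
      le_mul_of_one_le_right (by positivity)
        (by nlinarith [Int.one_le_abs hk, abs_mul_abs_self (b extra (A k))])
    _ = _ := by
      linear_combination (-(p k * b extra (A k) * b extra (A k)) : ℤ) * (hstar k).sq_hub

end Stars

theorem exists_lt_of_dotProduct_eq_neg_pretzelMatrix [DecidableEq ι] (hp : ∀ i, 2 ≤ p i)
    (hb : ∀ v w, b v ⬝ᵥ b w = -pretzelMatrix n p q v w)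
    (hsurj : ∀ φ : PretzelVertex n p → ℤ, ∃ y, ∀ v, b v ⬝ᵥ y = φ v) : ∃ i, p i < q := by
  by_contra! hq
  choose A σ c hstar using fun i => exists_isStar_chainSum hb (hp i)
  obtain ⟨k, hk⟩ := exists_extra_apply_ne_zero hp hb hstar
    (pairwise_disjoint_starSupport hp hb hsurj hstar)
  obtain ⟨y, hy, hey⟩ := exists_chainSum_dotProduct_eq_zero hsurj
  -- On `starSupport (A k) (c k)`, both `b extra` and `y` are multiples of one `±1`-vector of
  -- norm `p k`.
  rw [dotProduct_eq_sum_of_eq_zero fun _ => extra_eq_zero_of_notMem hp hb hstar hk (hq k),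
    (hstar k).sum_mul_eq (fun t => chainSum_dotProduct_extra hb k t) (fun t => hy k t),
    Nat.cast_sub (by have := hp k; omega)] at hey
  have hdvd : (p k : ℤ) ∣ 1 := ⟨σ k * b extra (A k) * (σ k * y (A k)), by rw [← hey]; ring⟩
  have := Int.le_of_dvd one_pos hdvd
  have := hp k
  omega

end Pretzel

/-- If the intersection lattice `(ℤ^V, G)` of the star-shaped plumbing for the
pretzel link `P(p_1,…,p_n,-q)` embeds in `-ℤ^N` (via `B` with `Bᵀ B = -G`) with
the map represented by `Bᵀ` surjective, then `q > min{p_1,…,p_n}`. -/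
theorem stmt_10 (n : ℕ) (hn : 2 ≤ n) (p : Fin n → ℕ) (hp : ∀ i, 2 ≤ p i)
    (q : ℕ)
    (V : ℕ)
    (e : PretzelVertex n p ≃ Fin V)
    (G : Matrix (Fin V) (Fin V) ℤ)
    (hG : ∀ a b : PretzelVertex n p, G (e a) (e b) = pretzelMatrix n p q a b)
    (hex : ∃ (N : ℕ) (B : Matrix (Fin N) (Fin V) ℤ),
      B.transpose * B = -G ∧
      Function.Surjective (fun x : Fin N → ℤ => B.transpose.mulVec x)) :
    Finset.univ.inf' (Finset.univ_nonempty_iff.mpr ⟨⟨0, by omega⟩⟩) p < q := by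
  obtain ⟨N, B, hB, hsurj⟩ := hex
  obtain ⟨i, hi⟩ := exists_lt_of_dotProduct_eq_neg_pretzelMatrix hp (b := fun v => Bᵀ (e v))
    (fun v w => by rw [← hG, ← neg_apply, ← hB]; rfl)
    fun φ => (hsurj (φ ∘ e.symm)).imp fun y hy v =>
      (congrFun hy (e v)).trans (congrArg φ (e.symm_apply_apply v))
  exact (inf'_le p (mem_univ i)).trans_lt hi
end

section
/- Let N and p be natural numbers with p ≥ 2 and let i_1, …, i_p be pairwise distinct indices in Fin N. Consider the N × p integer matrix M whose first p-1 columns are the vectors χ_{i_1} - χ_{i_2}, χ_{i_2} - χ_{i_3}, …, χ_{i_{p-1}} - χ_{i_p} and whose last column is χ_{i_1} + χ_{i_2} + ⋯ + χ_{i_p}. Then every nonzero entry of M lies in the p rows i_1, …, i_p, and the p × p submatrix of M on these rows has determinant p or -p. -/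
/-- The `N × p` matrix whose first `p-1` columns are the chain vectors
`χ_{i_1} - χ_{i_2}, …, χ_{i_{p-1}} - χ_{i_p}` and whose last column is
`χ_{i_1} + ⋯ + χ_{i_p}` has all its nonzero entries in the `p` rows `i_1, …, i_p`,
and the induced `p × p` minor on these rows has determinant `±p`. -/
theorem stmt_11 (N p : ℕ) (hp : 2 ≤ p) (i : Fin p → Fin N)
    (hi : Function.Injective i)
    (M : Matrix (Fin N) (Fin p) ℤ)
    (hM : ∀ (l : Fin N) (k : Fin p),
      M l k =
        if h : (k : ℕ) < p - 1 then
          (if l = i ⟨(k : ℕ), by omega⟩ then 1 else 0) -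
            (if l = i ⟨(k : ℕ) + 1, by omega⟩ then 1 else 0)
        else
          (if ∃ s, i s = l then 1 else 0)) :
    (∀ l : Fin N, l ∉ Set.range i → ∀ k, M l k = 0) ∧
      (Matrix.det (Matrix.of fun a b : Fin p => M (i a) b) = (p : ℤ) ∨
        Matrix.det (Matrix.of fun a b : Fin p => M (i a) b) = -(p : ℤ)) := by
  constructor
  · intro l hl k
    have h1 : ∀ t : Fin p, ¬ (l = i t) := fun t h => hl ⟨t, h.symm⟩
    rw [hM]
    split
    · rw [if_neg (h1 _), if_neg (h1 _)]; ring
    · rw [if_neg]; push_neg; intro s; exact fun h => h1 s h.symm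
  · left
    set A : Matrix (Fin p) (Fin p) ℤ := Matrix.of fun a b =>
      if (b : ℕ) < p - 1 then
        ((if (a : ℕ) = (b : ℕ) then 1 else 0) - (if (a : ℕ) = (b : ℕ) + 1 then 1 else 0))
      else 1 with hAdef
    have hAeq : (Matrix.of fun a b : Fin p => M (i a) b) = A := by
      ext a b
      simp only [Matrix.of_apply, hM, hAdef]
      split
      · simp [hi.eq_iff, Fin.ext_iff]
      · rw [if_pos ⟨a, rfl⟩]
    rw [hAeq]
    set U : Matrix (Fin p) (Fin p) ℤ := Matrix.of fun b c =>
      if b = c then 1 else if (c : ℕ) = p - 1 then -((b : ℕ) + 1 : ℤ) else 0 with hUdef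
    have hUdet : U.det = 1 := by
      rw [Matrix.det_of_upperTriangular]
      · simp [hUdef]
      · intro a b hba
        have hba' : (b : ℕ) < (a : ℕ) := hba
        have ha := a.isLt
        simp only [hUdef, Matrix.of_apply]
        rw [if_neg (by intro h; rw [h] at hba'; omega), if_neg (by omega)]
    -- compute the product A * U
    have hT : ∀ a c : Fin p, (A * U) a c =
        if (c : ℕ) = p - 1 then (if (a : ℕ) = p - 1 then (p : ℤ) else 0) else A a c := by
      intro a c
      rw [Matrix.mul_apply]
      by_cases hc : (c : ℕ) = p - 1
      · rw [if_pos hc]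
        have hstep : ∀ b : Fin p, A a b * U b c =
            (if b = c then (1 : ℤ) else 0) +
            (if b = a then (if (a : ℕ) < p - 1 then -((a : ℕ) + 1 : ℤ) else 0) else 0) +
            (if (a : ℕ) = (b : ℕ) + 1 then ((b : ℕ) + 1 : ℤ) else 0) := by
          intro b
          have hb := b.isLt
          have ha := a.isLt
          simp only [hAdef, hUdef, Matrix.of_apply]
          by_cases hbc : b = c
          · subst hbc
            rw [if_neg (show ¬ (b : ℕ) < p - 1 by omega), if_pos rfl, one_mul, if_pos rfl,
              if_neg (show ¬ (a : ℕ) = (b : ℕ) + 1 by omega)]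
            by_cases hba : b = a
            · have hap : (a : ℕ) = p - 1 := by rw [← hba]; exact hc
              rw [if_pos hba, if_neg (show ¬ (a : ℕ) < p - 1 by omega)]
              ring
            · rw [if_neg hba]; ring
          · have hblt : (b : ℕ) < p - 1 := by
              by_contra h; exact hbc (Fin.ext (by omega))
            rw [if_pos hblt, if_neg hbc, if_pos hc, if_neg hbc]
            by_cases hab : (a : ℕ) = (b : ℕ)
            · have hba : b = a := Fin.ext hab.symm
              rw [if_pos hab, if_neg (show ¬ (a : ℕ) = (b : ℕ) + 1 by omega),
                if_neg (show ¬ (a : ℕ) = (b : ℕ) + 1 by omega), if_pos hba,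
                if_pos (show (a : ℕ) < p - 1 by omega), hab]
              ring
            · have hba : ¬ b = a := fun h => hab (congrArg Fin.val h).symm
              rw [if_neg hab, if_neg hba]
              by_cases hab1 : (a : ℕ) = (b : ℕ) + 1
              · rw [if_pos hab1, if_pos hab1]; ring
              · rw [if_neg hab1, if_neg hab1]; ring
        rw [Finset.sum_congr rfl (fun b _ => hstep b)]
        rw [Finset.sum_add_distrib, Finset.sum_add_distrib,
          Finset.sum_ite_eq' Finset.univ c (fun _ => (1:ℤ)),
          Finset.sum_ite_eq' Finset.univ a]
        simp only [Finset.mem_univ, if_pos]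
        have hH : (∑ b : Fin p, if (a : ℕ) = (b : ℕ) + 1 then ((b : ℕ) + 1 : ℤ) else 0)
            = if 1 ≤ (a : ℕ) then ((a : ℕ) : ℤ) else 0 := by
          by_cases ha0 : 1 ≤ (a : ℕ)
          · rw [if_pos ha0]
            have ha := a.isLt
            have : ∀ b : Fin p, ((a : ℕ) = (b : ℕ) + 1) ↔ b = (⟨(a : ℕ) - 1, by omega⟩ : Fin p) := by
              intro b; constructor
              · intro h; exact Fin.ext (by simp; omega)
              · intro h; subst h; simp; omega
            simp only [this]
            rw [Finset.sum_ite_eq' Finset.univ (⟨(a : ℕ) - 1, by omega⟩ : Fin p)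
              (fun b => ((b : ℕ) + 1 : ℤ))]
            simp only [Finset.mem_univ, if_pos]
            omega
          · rw [if_neg ha0]
            apply Finset.sum_eq_zero
            intro b _
            rw [if_neg (by omega)]
        rw [hH]
        have ha := a.isLt
        by_cases hap : (a : ℕ) = p - 1
        · rw [if_pos hap, if_neg (by omega), if_pos (by omega)]
          omega
        · rw [if_neg hap, if_pos (by omega)]
          by_cases ha0 : 1 ≤ (a : ℕ)
          · rw [if_pos ha0]; omega
          · rw [if_neg ha0]; omega
      · rw [if_neg hc]
        have : ∀ b : Fin p, A a b * U b c = if b = c then A a c else 0 := by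
          intro b
          simp only [hUdef, Matrix.of_apply]
          by_cases hbc : b = c
          · subst hbc; rw [if_pos rfl, if_pos rfl, mul_one]
          · rw [if_neg hbc, if_neg hc, mul_zero, if_neg hbc]
        rw [Finset.sum_congr rfl (fun b _ => this b),
          Finset.sum_ite_eq' Finset.univ c (fun _ => A a c)]
        simp
    -- A*U is lower triangular with diagonal (1,...,1,p)
    have hdetT : (A * U).det = (p : ℤ) := by
      rw [Matrix.det_of_lowerTriangular]
      · have hdiag : ∀ a : Fin p, (A * U) a a = if (a : ℕ) = p - 1 then (p : ℤ) else 1 := by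
          intro a
          rw [hT]
          by_cases hap : (a : ℕ) = p - 1
          · rw [if_pos hap, if_pos hap, if_pos hap]
          · rw [if_neg hap, if_neg hap]
            have ha := a.isLt
            simp only [hAdef, Matrix.of_apply]
            rw [if_pos (show (a : ℕ) < p - 1 by omega),
              if_neg (show ¬ (a : ℕ) = (a : ℕ) + 1 by omega)]
            simp
        rw [Finset.prod_congr rfl (fun a _ => hdiag a)]
        have : ∀ a : Fin p, ((a : ℕ) = p - 1) ↔ a = (⟨p - 1, by omega⟩ : Fin p) := by
          intro a; exact ⟨fun h => Fin.ext h, fun h => h ▸ rfl⟩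
        simp only [this]
        rw [Finset.prod_ite_eq' Finset.univ (⟨p - 1, by omega⟩ : Fin p) (fun _ => (p : ℤ))]
        simp
      · intro a b hab
        have hab' : (a : ℕ) < (b : ℕ) := hab
        have hb := b.isLt
        rw [hT]
        by_cases hbp : (b : ℕ) = p - 1
        · rw [if_pos hbp, if_neg (by omega)]
        · rw [if_neg hbp]
          simp only [hAdef, Matrix.of_apply]
          rw [if_pos (by omega), if_neg (by omega), if_neg (by omega)]
          ring
    have := Matrix.det_mul A U
    rw [hUdet, mul_one] at this
    rw [← this, hdetT]
end
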